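/- Let T be an admissible domino tableau of type C with clusters 𝒞_T and map b_T. Every cluster of T other than the cluster b_T(0) contains at least one domino of type (I+). -/
import Mathlib


/-- A domino in the plane (rows and columns numbered from 1, matrix style):
`H i j` is the horizontal domino with boxes `(i,j)` and `(i,j+1)`;
`V i j` is the vertical domino with boxes `(i,j)` and `(i+1,j)`. -/
inductive Domino : Type
  | H : ℕ → ℕ → Domino
  | V : ℕ → ℕ → Domino
deriving DecidableEq

/-- The two boxes of a domino. -/
def Domino.boxes : Domino → Finset (ℕ × ℕ)
  | .H i j => {(i, j), (i, j + 1)}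
  | .V i j => {(i, j), (i + 1, j)}

/-- The boxes of a domino have row and column indices `≥ 1`. -/
def Domino.valid : Domino → Prop
  | .H i j => 1 ≤ i ∧ 1 ≤ j
  | .V i j => 1 ≤ i ∧ 1 ≤ j

/-- A domino of type `(I+)` (type C): vertical, lying in an even column. -/
def Domino.IsIPlus : Domino → Prop
  | .H _ _ => False
  | .V _ j => j % 2 = 0

/-- A domino tableau with `n` dominoes is encoded as a list of dominoes **in
decreasing order of labels**: the head has label `n` and the last element has
label `1`; `T^i` (dominoes with labels `≤ i`) is `T.drop (n - i)`. -/
def boxesOf (T : List Domino) : Finset (ℕ × ℕ) :=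
  T.foldr (fun d s => d.boxes ∪ s) ∅

/-- The length of row `i` of the tableau `T`. -/
def rowLen (T : List Domino) (i : ℕ) : ℕ :=
  ((boxesOf T).filter (fun p => p.1 = i)).card

/-- The shape of `T`: the multiset of (positive) row lengths, i.e. the partition
whose Young diagram is the set of boxes of `T`. -/
def shapeOf (T : List Domino) : Multiset ℕ :=
  ((boxesOf T).image Prod.fst).val.map (rowLen T)

/-- The set of parts of the shape of `T`. -/
def partsFinset (T : List Domino) : Finset ℕ :=
  ((boxesOf T).image Prod.fst).image (rowLen T)

/-- The label of the box `p` in `T` (the head of `T` has the largest label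
`T.length`; boxes outside `T` get the junk value `0`). -/
def labelOf : List Domino → ℕ × ℕ → ℕ
  | [], _ => 0
  | d :: rest, p => if p ∈ d.boxes then rest.length + 1 else labelOf rest p

/-- Van Leeuwen's clusters of an (admissible, type C) domino tableau `T`, by induction
on the number of dominoes. `(clusterData T).1` is the set of clusters, each cluster
being the `Finset` of the labels of its dominoes, and `(clusterData T).2` is the map
`b_T`, sending each even number `2i` (an element of `B_λ = {0} ∪ {even parts}`) to a
cluster. If `T = [d]`, there is one cluster and `b_T` is constant. For `T = d :: rest`
with `d` the domino of maximal label `n`: if `d` is of type (N) in columns `2i−1, 2i`,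
the clusters `b'(2i−2)`, `d` and (when `2i` is a part of the shape of `rest`) `b'(2i)`
merge into a new cluster; if `d` is of type (I+) in column `2i`, `d` and (when `2i` is
a part) `b'(2i)` merge; if `d` is of type (I−) in column `2i+1`, `d` and `b'(2i)`
merge. The untouched clusters and values of `b'` persist, and all members of `B_λ`
previously sent to a merged cluster (as well as `2i`, in the (N) and (I+) cases) are
sent to the new cluster. -/
def clusterData : List Domino → Finset (Finset ℕ) × (ℕ → Finset ℕ)
  | [] => (∅, fun _ => ∅)
  | [_] => ({({1} : Finset ℕ)}, fun _ => ({1} : Finset ℕ))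
  | d :: rest =>
      let P := clusterData rest
      let n := rest.length + 1
      match d with
      | .H _ j =>
          if j % 2 = 1 then
            -- type (N), columns j = 2i−1 and c = 2i
            let c := j + 1
            let olds : Finset (Finset ℕ) :=
              if c ∈ partsFinset rest then {P.2 (c - 2), P.2 c} else {P.2 (c - 2)}
            let newC : Finset ℕ :=
              insert n (if c ∈ partsFinset rest then P.2 (c - 2) ∪ P.2 c else P.2 (c - 2))
            ((P.1 \ olds) ∪ {newC},
             fun m => if P.2 m ∈ olds ∨ m = c then newC else P.2 m)
          else P
      | .V _ j =>
          if j % 2 = 0 then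
            -- type (I+), column c = 2i
            let c := j
            if c ∈ partsFinset rest then
              let newC : Finset ℕ := insert n (P.2 c)
              ((P.1 \ {P.2 c}) ∪ {newC},
               fun m => if P.2 m = P.2 c ∨ m = c then newC else P.2 m)
            else
              let newC : Finset ℕ := ({n} : Finset ℕ)
              (P.1 ∪ {newC}, fun m => if m = c then newC else P.2 m)
          else
            -- type (I−), column j = 2i+1, merge with b'(2i)
            let c := j - 1
            let newC : Finset ℕ := insert n (P.2 c)
            ((P.1 \ {P.2 c}) ∪ {newC},
             fun m => if P.2 m = P.2 c then newC else P.2 m)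

/-- The set of boxes is a Young diagram (rows/columns from 1, left- and top-justified). -/
def IsYoungDiagramSet (S : Finset (ℕ × ℕ)) : Prop :=
  (∀ p ∈ S, 1 ≤ p.1 ∧ 1 ≤ p.2) ∧
  (∀ i j, (i, j + 1) ∈ S → 1 ≤ j → (i, j) ∈ S) ∧
  (∀ i j, (i + 1, j) ∈ S → 1 ≤ i → (i, j) ∈ S)

/-- `T` (a list of dominoes in decreasing label order) is a standard domino tableau:
the dominoes are pairwise disjoint, their union is a Young diagram, and the labels
weakly increase along rows and columns. -/
def IsStandardDT (T : List Domino) : Prop :=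
  (∀ d ∈ T, d.valid) ∧
  T.Pairwise (fun d d' => Disjoint d.boxes d'.boxes) ∧
  IsYoungDiagramSet (boxesOf T) ∧
  (∀ i j, (i, j) ∈ boxesOf T → (i + 1, j) ∈ boxesOf T →
    labelOf T (i, j) ≤ labelOf T (i + 1, j)) ∧
  (∀ i j, (i, j) ∈ boxesOf T → (i, j + 1) ∈ boxesOf T →
    labelOf T (i, j) ≤ labelOf T (i, j + 1))

/-- A partition is of type C: it is a partition of an even number in which every odd
part has even multiplicity. -/
def IsTypeCShape (μ : Multiset ℕ) : Prop :=
  Even μ.sum ∧ ∀ m, Odd m → Even (μ.count m)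

/-- `T` is an admissible domino tableau of type C: it is standard, and the shape of
every `T^i` (here: of every suffix of the list) is of type C. -/
def IsAdmissibleC (T : List Domino) : Prop :=
  IsStandardDT T ∧ ∀ k, IsTypeCShape (shapeOf (T.drop k))

/-- The domino of `T` with label `k` (recall the head of the list has the largest
label `T.length`). -/
def dominoOf (T : List Domino) (k : ℕ) : Domino :=
  T.getD (T.length - k) (Domino.H 0 0)

lemma dominoOf_cons (d : Domino) (R : List Domino) (k : ℕ) (h1 : 1 ≤ k) (h2 : k ≤ R.length) :
    dominoOf (d :: R) k = dominoOf R k := by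
  unfold dominoOf
  have h : (d :: R).length - k = (R.length - k) + 1 := by
    simp only [List.length_cons]; omega
  rw [h]
  rfl

lemma dominoOf_head (d : Domino) (R : List Domino) :
    dominoOf (d :: R) (R.length + 1) = d := by
  simp [dominoOf]

lemma b_mem : ∀ (T : List Domino), T ≠ [] → ∀ m, (clusterData T).2 m ∈ (clusterData T).1 := by
  intro T
  induction T with
  | nil => simp
  | cons d rest ih =>
    rcases rest with _ | ⟨e, rest⟩
    · intro _ m; simp [clusterData]
    · intro _ m
      have ih' := ih (by simp)
      cases d with
      | H i j =>
        simp only [clusterData]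
        by_cases hj : j % 2 = 1
        · rw [if_pos hj]
          try dsimp only
          by_cases hp : j + 1 ∈ partsFinset (e :: rest)
          · simp only [if_pos hp]
            split_ifs with h
            · exact Finset.mem_union_right _ (Finset.mem_singleton_self _)
            · push_neg at h
              exact Finset.mem_union_left _ (Finset.mem_sdiff.2 ⟨ih' m, h.1⟩)
          · simp only [if_neg hp]
            split_ifs with h
            · exact Finset.mem_union_right _ (Finset.mem_singleton_self _)
            · push_neg at h
              exact Finset.mem_union_left _ (Finset.mem_sdiff.2 ⟨ih' m, h.1⟩)
        · rw [if_neg hj]; exact ih' m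
      | V i j =>
        simp only [clusterData]
        by_cases hj : j % 2 = 0
        · rw [if_pos hj]
          try dsimp only
          by_cases hp : j ∈ partsFinset (e :: rest)
          · simp only [if_pos hp]
            try dsimp only
            split_ifs with h
            · exact Finset.mem_union_right _ (Finset.mem_singleton_self _)
            · push_neg at h
              exact Finset.mem_union_left _
                (Finset.mem_sdiff.2 ⟨ih' m, Finset.notMem_singleton.2 h.1⟩)
          · simp only [if_neg hp]
            try dsimp only
            split_ifs with h
            · exact Finset.mem_union_right _ (Finset.mem_singleton_self _)
            · exact Finset.mem_union_left _ (ih' m)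
        · rw [if_neg hj]
          try dsimp only
          split_ifs with h
          · exact Finset.mem_union_right _ (Finset.mem_singleton_self _)
          · exact Finset.mem_union_left _
              (Finset.mem_sdiff.2 ⟨ih' m, Finset.notMem_singleton.2 h⟩)

lemma cluster_bound : ∀ (T : List Domino), ∀ Cl ∈ (clusterData T).1, ∀ k ∈ Cl, 1 ≤ k ∧ k ≤ T.length := by
  intro T
  induction T with
  | nil => simp [clusterData]
  | cons d rest ih =>
    rcases rest with _ | ⟨e, rest⟩
    · intro Cl hCl k hk
      simp [clusterData] at hCl
      subst hCl
      simp only [Finset.mem_singleton] at hk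
      subst hk
      exact ⟨le_refl 1, by simp⟩
    · intro Cl hCl k hk
      simp only [List.length_cons]
      have hb := b_mem (e :: rest) (by simp)
      have bound : ∀ m, ∀ k' ∈ (clusterData (e :: rest)).2 m, 1 ≤ k' ∧ k' ≤ rest.length + 1 :=
        fun m k' hk' => by simpa using ih _ (hb m) k' hk'
      have ihL : ∀ Cl' ∈ (clusterData (e :: rest)).1, ∀ k' ∈ Cl', 1 ≤ k' ∧ k' ≤ rest.length + 1 :=
        fun Cl' h k' hk' => by simpa using ih Cl' h k' hk'
      cases d with
      | H i j =>
        simp only [clusterData] at hCl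
        split_ifs at hCl with hj h1
        · rcases Finset.mem_union.1 hCl with h | h
          · have := ihL Cl (Finset.mem_sdiff.1 h).1 k hk; omega
          · rw [Finset.mem_singleton.1 h] at hk
            rcases Finset.mem_insert.1 hk with h' | h'
            · simp only [List.length_cons] at h'; omega
            · rcases Finset.mem_union.1 h' with h'' | h'' <;>
                · have := bound _ k h''; omega
        · rcases Finset.mem_union.1 hCl with h | h
          · have := ihL Cl (Finset.mem_sdiff.1 h).1 k hk; omega
          · rw [Finset.mem_singleton.1 h] at hk
            rcases Finset.mem_insert.1 hk with h' | h'
            · simp only [List.length_cons] at h'; omega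
            · have := bound _ k h'; omega
        · have := ihL Cl hCl k hk; omega
      | V i j =>
        simp only [clusterData] at hCl
        split_ifs at hCl with hj h1
        · rcases Finset.mem_union.1 hCl with h | h
          · have := ihL Cl (Finset.mem_sdiff.1 h).1 k hk; omega
          · rw [Finset.mem_singleton.1 h] at hk
            rcases Finset.mem_insert.1 hk with h' | h'
            · simp only [List.length_cons] at h'; omega
            · have := bound _ k h'; omega
        · rcases Finset.mem_union.1 hCl with h | h
          · have := ihL Cl h k hk; omega
          · rw [Finset.mem_singleton.1 h] at hk
            simp only [Finset.mem_singleton, List.length_cons] at hk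
            omega
        · rcases Finset.mem_union.1 hCl with h | h
          · have := ihL Cl (Finset.mem_sdiff.1 h).1 k hk; omega
          · rw [Finset.mem_singleton.1 h] at hk
            rcases Finset.mem_insert.1 hk with h' | h'
            · simp only [List.length_cons] at h'; omega
            · have := bound _ k h'; omega

theorem auxIPlus : ∀ (T : List Domino), (∀ d ∈ T, d.valid) →
    ∀ Cl ∈ (clusterData T).1, Cl ≠ (clusterData T).2 0 →
      ∃ k ∈ Cl, (dominoOf T k).IsIPlus := by
  intro T
  induction T with
  | nil => intro _ Cl hCl _; simp [clusterData] at hCl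
  | cons d rest ih =>
    rcases rest with _ | ⟨e, rest⟩
    · intro _ Cl hCl hne
      simp [clusterData] at hCl hne
      exact absurd hCl hne
    · intro hv Cl hCl hne
      have hv' : ∀ d' ∈ (e :: rest), d'.valid := fun d' h => hv d' (List.mem_cons_of_mem _ h)
      have ihr := ih hv'
      have hbmem := b_mem (e :: rest) (by simp)
      have hbd := cluster_bound (e :: rest)
      have htrans : ∀ Cl' ∈ (clusterData (e :: rest)).1, Cl' ≠ (clusterData (e :: rest)).2 0 →
          ∃ k ∈ Cl', (dominoOf (d :: e :: rest) k).IsIPlus := by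
        intro Cl' h1 h2
        obtain ⟨k, hk, hI⟩ := ihr Cl' h1 h2
        obtain ⟨hk1, hk2⟩ := hbd Cl' h1 k hk
        exact ⟨k, hk, by rwa [dominoOf_cons _ _ _ hk1 hk2]⟩
      cases d with
      | H i j =>
        simp only [clusterData] at hCl hne
        by_cases hj : j % 2 = 1
        swap
        · rw [if_neg hj] at hCl hne; exact htrans Cl hCl hne
        rw [if_pos hj] at hCl hne
        try dsimp only at hCl hne
        by_cases hp : j + 1 ∈ partsFinset (e :: rest)
        · simp only [if_pos hp] at hCl hne
          rcases Finset.mem_union.1 hCl with h | h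
          · obtain ⟨hP, hnold⟩ := Finset.mem_sdiff.1 h
            have hCl0 : Cl ≠ (clusterData (e :: rest)).2 0 := by
              by_cases hb0 : (clusterData (e :: rest)).2 0 ∈
                  ({(clusterData (e :: rest)).2 (j + 1 - 2), (clusterData (e :: rest)).2 (j + 1)}
                    : Finset (Finset ℕ))
              · intro hEq; exact hnold (hEq ▸ hb0)
              · rw [if_neg (by push_neg; exact ⟨hb0, by omega⟩)] at hne; exact hne
            exact htrans Cl hP hCl0
          · rw [Finset.mem_singleton.1 h] at hne ⊢
            have hb0 : (clusterData (e :: rest)).2 0 ∉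
                ({(clusterData (e :: rest)).2 (j + 1 - 2), (clusterData (e :: rest)).2 (j + 1)}
                  : Finset (Finset ℕ)) := by
              by_contra hc
              exact hne (by rw [if_pos (Or.inl hc)])
            have hneq : (clusterData (e :: rest)).2 (j + 1 - 2) ≠ (clusterData (e :: rest)).2 0 := by
              intro hEq
              exact hb0 (by rw [← hEq]; simp)
            obtain ⟨k, hk, hI⟩ := htrans _ (hbmem (j + 1 - 2)) hneq
            exact ⟨k, Finset.mem_insert_of_mem (Finset.mem_union_left _ hk), hI⟩
        · simp only [if_neg hp] at hCl hne
          rcases Finset.mem_union.1 hCl with h | h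
          · obtain ⟨hP, hnold⟩ := Finset.mem_sdiff.1 h
            have hCl0 : Cl ≠ (clusterData (e :: rest)).2 0 := by
              by_cases hb0 : (clusterData (e :: rest)).2 0 ∈
                  ({(clusterData (e :: rest)).2 (j + 1 - 2)} : Finset (Finset ℕ))
              · intro hEq; exact hnold (hEq ▸ hb0)
              · rw [if_neg (by push_neg; exact ⟨hb0, by omega⟩)] at hne; exact hne
            exact htrans Cl hP hCl0
          · rw [Finset.mem_singleton.1 h] at hne ⊢
            have hb0 : (clusterData (e :: rest)).2 0 ∉
                ({(clusterData (e :: rest)).2 (j + 1 - 2)} : Finset (Finset ℕ)) := by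
              by_contra hc
              exact hne (by rw [if_pos (Or.inl hc)])
            have hneq : (clusterData (e :: rest)).2 (j + 1 - 2) ≠ (clusterData (e :: rest)).2 0 := by
              intro hEq
              exact hb0 (by rw [← hEq]; simp)
            obtain ⟨k, hk, hI⟩ := htrans _ (hbmem (j + 1 - 2)) hneq
            exact ⟨k, Finset.mem_insert_of_mem hk, hI⟩
      | V i j =>
        have hval : 1 ≤ j := (hv (Domino.V i j) (by simp)).2
        simp only [clusterData] at hCl hne
        by_cases hj : j % 2 = 0
        · rw [if_pos hj] at hCl hne
          have hj2 : j ≠ 0 := by omega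
          try dsimp only at hCl hne
          by_cases hp : j ∈ partsFinset (e :: rest)
          · simp only [if_pos hp] at hCl hne
            try dsimp only at hCl hne
            rcases Finset.mem_union.1 hCl with h | h
            · obtain ⟨hP, hnold⟩ := Finset.mem_sdiff.1 h
              have hClc : Cl ≠ (clusterData (e :: rest)).2 j :=
                fun hEq => hnold (Finset.mem_singleton.2 hEq)
              have hCl0 : Cl ≠ (clusterData (e :: rest)).2 0 := by
                by_cases hb0 : (clusterData (e :: rest)).2 0 = (clusterData (e :: rest)).2 j
                · rw [hb0]; exact hClc
                · rw [if_neg (by push_neg; exact ⟨hb0, by omega⟩)] at hne; exact hne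
              exact htrans Cl hP hCl0
            · refine ⟨(e :: rest).length + 1, ?_, ?_⟩
              · rw [Finset.mem_singleton.1 h]; exact Finset.mem_insert_self _ _
              · rw [dominoOf_head]; exact hj
          · simp only [if_neg hp] at hCl hne
            try dsimp only at hCl hne
            rcases Finset.mem_union.1 hCl with h | h
            · have hCl0 : Cl ≠ (clusterData (e :: rest)).2 0 := by
                rw [if_neg (by omega)] at hne; exact hne
              exact htrans Cl h hCl0
            · refine ⟨(e :: rest).length + 1, ?_, ?_⟩
              · rw [Finset.mem_singleton.1 h]; exact Finset.mem_singleton_self _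
              · rw [dominoOf_head]; exact hj
        · rw [if_neg hj] at hCl hne
          try dsimp only at hCl hne
          rcases Finset.mem_union.1 hCl with h | h
          · obtain ⟨hP, hnold⟩ := Finset.mem_sdiff.1 h
            have hClc : Cl ≠ (clusterData (e :: rest)).2 (j - 1) :=
              fun hEq => hnold (Finset.mem_singleton.2 hEq)
            have hCl0 : Cl ≠ (clusterData (e :: rest)).2 0 := by
              by_cases hb0 : (clusterData (e :: rest)).2 0 = (clusterData (e :: rest)).2 (j - 1)
              · rw [hb0]; exact hClc
              · rw [if_neg hb0] at hne; exact hne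
            exact htrans Cl hP hCl0
          · rw [Finset.mem_singleton.1 h] at hne ⊢
            have hb0 : (clusterData (e :: rest)).2 0 ≠ (clusterData (e :: rest)).2 (j - 1) := by
              intro hc
              exact hne (by rw [if_pos hc])
            obtain ⟨k, hk, hI⟩ := htrans _ (hbmem (j - 1)) (Ne.symm hb0)
            exact ⟨k, Finset.mem_insert_of_mem hk, hI⟩

/-- Every cluster of an admissible type-C domino tableau other than the cluster
`b_T(0)` contains at least one domino of type `(I+)`. -/
theorem stmt3 (T : List Domino) (hT : IsAdmissibleC T) :
    ∀ Cl ∈ (clusterData T).1, Cl ≠ (clusterData T).2 0 →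
      ∃ k ∈ Cl, (dominoOf T k).IsIPlus := by
  exact auxIPlus T hT.1.1
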